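/- Let A be a real m×n matrix, b ∈ ℝ^m, and assume V = {v ∈ ℝ^n : A v ≥ b} is nonempty and bounded. Let (x^i, c^i), i = 1,…,N, be data with x^i ∈ ℝ^K and c^i ∈ ℝ^n. For ω ∈ ℝ^{n×K} let Λ(ω) = sup{(1/N) Σ_{i=1}^N c^i · v^i : v^i ∈ V*(ω x^i) for each i}. Fix ω̄ ∈ ℝ^{n×K}. Suppose (μ*, δ*, γ*) minimizes Σ_{i=1}^N (b · μ^i + (ω̄ x^i) · δ^i) over all (μ^i, δ^i, γ^i)_{i=1}^N with μ^i ∈ ℝ^m, δ^i ∈ ℝ^n, γ^i ∈ ℝ satisfying A^T μ^i + γ^i (ω̄ x^i) = (1/N) c^i, A δ^i − γ^i b ≥ 0, μ^i ≤ 0 and γ^i ≥ 0 for all i. Suppose further that (μ', ω') minimizes Σ_{i=1}^N (b · μ^i + (ω x^i) · δ*^i) over all (μ^i)_{i=1}^N and ω ∈ ℝ^{n×K} satisfying A^T μ^i + γ*^i (ω x^i) = (1/N) c^i and μ^i ≤ 0 for all i. Then Λ(ω') ≤ Λ(ω̄). -/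

import Mathlib

/-!
For `u = ω x^i` the set `V*(u)` is the polyhedron `{v : A v ≥ b, u · v ≤ z*(u)}`, and any
`(μ, γ, δ)` with `Aᵀ μ + γ u = c^i / N`, `γ b ≤ A δ`, `μ ≤ 0`, `γ ≥ 0` bounds `c^i · v / N` on it
by `b · μ + u · δ`: weak duality, where `γ z*(u) ≤ u · δ` because `δ / γ ∈ V`, or `δ = 0` when
`γ = 0` since `V` is bounded. So `Λ(ω')` is at most the objective at `(μ', ω')`, hence at
`(μ*, ω̄)`, hence at any feasible point of the first program. LP strong duality (from Farkas'
lemma) for maximizing `c^i · v / N` over `V*(ω̄ x^i)` provides a feasible point whose objective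
is at most `Λ(ω̄)`.
-/

open Matrix Set BigOperators

noncomputable section

/-- The polyhedron `V = {v : A v ≥ b}` (inequalities entrywise). -/
def polyV {m n : ℕ} (A : Matrix (Fin m) (Fin n) ℝ) (b : Fin m → ℝ) : Set (Fin n → ℝ) :=
  {v | b ≤ A.mulVec v}

/-- `z*(c)`: the optimal (infimum) value of `c · v` over `V`. -/
noncomputable def zstar {m n : ℕ} (A : Matrix (Fin m) (Fin n) ℝ) (b : Fin m → ℝ)
    (c : Fin n → ℝ) : ℝ :=
  sInf ((fun v => c ⬝ᵥ v) '' polyV A b)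

/-- `V*(c)`: the set of optimal solutions of `min {c · v : v ∈ V}`. -/
def Vstar {m n : ℕ} (A : Matrix (Fin m) (Fin n) ℝ) (b : Fin m → ℝ)
    (c : Fin n → ℝ) : Set (Fin n → ℝ) :=
  {v ∈ polyV A b | c ⬝ᵥ v = zstar A b c}

/-- The pessimistic value `Λ(ω)` of the linear model `ω`. -/
noncomputable def pessValue {m n N K : ℕ} (A : Matrix (Fin m) (Fin n) ℝ) (b : Fin m → ℝ)
    (x : Fin N → Fin K → ℝ) (c : Fin N → Fin n → ℝ)
    (ω : Matrix (Fin n) (Fin K) ℝ) : ℝ :=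
  sSup {r : ℝ | ∃ v : Fin N → Fin n → ℝ,
    (∀ i, v i ∈ Vstar A b (ω.mulVec (x i))) ∧
    r = (1 / (N : ℝ)) * ∑ i, c i ⬝ᵥ v i}

lemma exists_nonneg_sum_insert_eq {R E κ : Type*} [Semiring R] [Preorder R] [AddCommMonoid E]
    [Module R E] [DecidableEq κ] {s : Finset κ} {a : κ} (ha : a ∉ s) (v : κ → E) {y : κ → R}
    (hy : ∀ j ∈ s, 0 ≤ y j) {r : R} (hr : 0 ≤ r) :
    ∃ y' : κ → R, (∀ j ∈ insert a s, 0 ≤ y' j) ∧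
      ∑ j ∈ insert a s, y' j • v j = r • v a + ∑ j ∈ s, y j • v j := by
  have hupd : ∀ j ∈ s, Function.update y a r j = y j := fun j hj =>
    Function.update_of_ne (ne_of_mem_of_not_mem hj ha) _ _
  refine ⟨Function.update y a r, Finset.forall_mem_insert _ _ _ |>.mpr
    ⟨by simpa using hr, fun j hj => hupd j hj ▸ hy j hj⟩, ?_⟩
  rw [Finset.sum_insert ha, Function.update_self]
  exact congrArg _ (Finset.sum_congr rfl fun j hj => by rw [hupd j hj])

section Farkas

variable {𝕜 κ ι : Type*} [Field 𝕜] [LinearOrder 𝕜] [IsStrictOrderedRing 𝕜] [Fintype ι]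

lemma sub_smul_dotProduct_eq (u w z w' : ι → 𝕜) :
    (z - (z ⬝ᵥ w / u ⬝ᵥ w) • u) ⬝ᵥ w' = z ⬝ᵥ (w' - (u ⬝ᵥ w' / u ⬝ᵥ w) • w) := by
  simp only [sub_dotProduct, dotProduct_sub, smul_dotProduct, dotProduct_smul, smul_eq_mul]
  ring

theorem farkas_finset [DecidableEq κ] (s : Finset κ) (v : κ → ι → 𝕜) (b : ι → 𝕜) :
    (∃ y : κ → 𝕜, (∀ j ∈ s, 0 ≤ y j) ∧ ∑ j ∈ s, y j • v j = b) ∨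
      ∃ w : ι → 𝕜, (∀ j ∈ s, 0 ≤ v j ⬝ᵥ w) ∧ b ⬝ᵥ w < 0 := by
  induction s using Finset.induction_on generalizing v b with
  | empty =>
    by_cases hb : b = 0
    · exact .inl ⟨0, by simp, by simp [hb]⟩
    · refine .inr ⟨-b, by simp, ?_⟩
      rw [dotProduct_neg, neg_neg_iff_pos]
      exact lt_of_le_of_ne (Finset.sum_nonneg fun i _ => mul_self_nonneg (b i))
        (Ne.symm (dotProduct_self_eq_zero.not.mpr hb))
  | insert a s ha ih =>
    rcases ih v b with ⟨y, hy, hyb⟩ | ⟨w, hw, hbw⟩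
    · obtain ⟨y', hy', hyb'⟩ := exists_nonneg_sum_insert_eq ha v hy le_rfl
      exact .inl ⟨y', hy', by rw [hyb', zero_smul, zero_add, hyb]⟩
    by_cases hu : 0 ≤ v a ⬝ᵥ w
    · exact .inr ⟨w, Finset.forall_mem_insert _ _ _ |>.mpr ⟨hu, hw⟩, hbw⟩
    push Not at hu
    set u := v a
    -- project along `u` onto the hyperplane `w⊥`, and apply the induction hypothesis there
    set α : (ι → 𝕜) → 𝕜 := fun z => z ⬝ᵥ w / u ⬝ᵥ w
    rcases ih (fun j => v j - α (v j) • u) (b - α b • u) with ⟨y, hy, hyb⟩ | ⟨w', hw', hbw'⟩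
    · have hαv : ∑ j ∈ s, y j * α (v j) ≤ 0 :=
        Finset.sum_nonpos fun j hj => mul_nonpos_of_nonneg_of_nonpos (hy j hj)
          (div_nonpos_of_nonneg_of_nonpos (hw j hj) hu.le)
      have hαb : 0 < α b := div_pos_of_neg_of_neg hbw hu
      obtain ⟨y', hy', hyb'⟩ := exists_nonneg_sum_insert_eq ha v hy
        (r := α b - ∑ j ∈ s, y j * α (v j)) (by linarith)
      refine .inl ⟨y', hy', ?_⟩
      simp only [smul_sub, smul_smul, Finset.sum_sub_distrib, ← Finset.sum_smul] at hyb
      rw [hyb', sub_smul]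
      linear_combination (norm := module) hyb
    · refine .inr ⟨w' - (u ⬝ᵥ w' / u ⬝ᵥ w) • w, Finset.forall_mem_insert _ _ _ |>.mpr ⟨?_, ?_⟩, ?_⟩
      · rw [← sub_smul_dotProduct_eq, div_self hu.ne, one_smul, sub_self, zero_dotProduct]
      · intro j hj
        rw [← sub_smul_dotProduct_eq]
        exact hw' j hj
      · rw [← sub_smul_dotProduct_eq]
        exact hbw'

variable [Fintype κ]

theorem farkas (M : Matrix κ ι 𝕜) (b : ι → 𝕜) :
    (∃ y, 0 ≤ y ∧ y ᵥ* M = b) ∨ ∃ w, 0 ≤ M *ᵥ w ∧ b ⬝ᵥ w < 0 := by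
  classical
  rcases farkas_finset Finset.univ (fun j => M j) b with ⟨y, hy, hyb⟩ | ⟨w, hw, hbw⟩
  · exact .inl ⟨y, fun j => hy j (Finset.mem_univ j), by rw [vecMul_eq_sum, hyb]⟩
  · exact .inr ⟨w, fun j => hw j (Finset.mem_univ j), hbw⟩

theorem lp_strong_duality (M : Matrix κ ι 𝕜) (q : κ → 𝕜) (c : ι → 𝕜) {x₀ : ι → 𝕜}
    (hx₀ : q ≤ M *ᵥ x₀) (hopt : ∀ x, q ≤ M *ᵥ x → c ⬝ᵥ x₀ ≤ c ⬝ᵥ x) :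
    ∃ y, 0 ≤ y ∧ y ᵥ* M = c ∧ c ⬝ᵥ x₀ ≤ q ⬝ᵥ y := by
  -- Farkas for the homogenized system `[M q; 0 -1]` and the target `(c, c ⬝ᵥ x₀)`
  rcases farkas (fromBlocks M (replicateCol Unit q) 0 (-1 : Matrix Unit Unit 𝕜))
    (Sum.elim c fun _ => c ⬝ᵥ x₀) with ⟨y, hy, hyc⟩ | ⟨w, hw, hwc⟩
  · obtain ⟨y, t, rfl⟩ : ∃ y₁ t, y = Sum.elim y₁ t := ⟨_, _, (Sum.elim_comp_inl_inr y).symm⟩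
    rw [vecMul_fromBlocks, Sum.elim_comp_inl, Sum.elim_comp_inr, vecMul_zero, add_zero,
      vecMul_neg, vecMul_one, Sum.elim_eq_iff] at hyc
    refine ⟨y, fun j => hy (Sum.inl j), hyc.1, ?_⟩
    have hq : y ⬝ᵥ q + -t () = c ⬝ᵥ x₀ := congrFun hyc.2 ()
    have ht : 0 ≤ t () := hy (Sum.inr ())
    rw [dotProduct_comm q]
    linarith
  · obtain ⟨w, t, rfl⟩ : ∃ w₁ t, w = Sum.elim w₁ t := ⟨_, _, (Sum.elim_comp_inl_inr w).symm⟩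
    rw [fromBlocks_mulVec, Sum.elim_comp_inl, Sum.elim_comp_inr, zero_mulVec, zero_add,
      neg_mulVec, one_mulVec, ← Sum.elim_zero_zero, Sum.elim_le_elim_iff] at hw
    rw [sumElim_dotProduct_sumElim] at hwc
    have ht : 0 ≤ -t () := hw.2 ()
    have hMw : -t () • q ≤ M *ᵥ w := by
      have h : replicateCol Unit q *ᵥ t = t () • q := by
        ext; simp [mulVec, replicateCol, dotProduct, mul_comm]
      have := hw.1
      rw [h, ← sub_neg_eq_add, sub_nonneg, ← neg_smul] at this
      exact this
    have hwc' : c ⬝ᵥ w < -t () * c ⬝ᵥ x₀ := by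
      have h : (fun _ => c ⬝ᵥ x₀) ⬝ᵥ t = c ⬝ᵥ x₀ * t () := Fintype.sum_unique _
      rw [h] at hwc
      linarith
    -- `(x₀ + w) / (1 - t ())` is feasible and strictly cheaper than `x₀`
    have hpos : (0 : 𝕜) < 1 + -t () := by linarith
    have hfeas : q ≤ M *ᵥ ((1 + -t ())⁻¹ • (x₀ + w)) := by
      rw [mulVec_smul, le_inv_smul_iff_of_pos hpos, mulVec_add, add_smul, one_smul]
      exact add_le_add hx₀ hMw
    have := hopt _ hfeas
    rw [dotProduct_smul, smul_eq_mul, le_inv_mul_iff₀ hpos, dotProduct_add] at this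
    linarith

end Farkas

section Polyhedron

variable {m n : ℕ} {A : Matrix (Fin m) (Fin n) ℝ} {b : Fin m → ℝ}

lemma isClosed_polyV : IsClosed (polyV A b) :=
  isClosed_Ici.preimage (continuous_const.matrix_mulVec continuous_id)

lemma isCompact_polyV (hbd : Bornology.IsBounded (polyV A b)) : IsCompact (polyV A b) :=
  Metric.isCompact_of_isClosed_isBounded isClosed_polyV hbd

lemma isCompact_image_dotProduct_polyV (hbd : Bornology.IsBounded (polyV A b)) (u : Fin n → ℝ) :
    IsCompact ((fun v => u ⬝ᵥ v) '' polyV A b) :=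
  (isCompact_polyV hbd).image (continuous_const.dotProduct continuous_id)

lemma zstar_le (hbd : Bornology.IsBounded (polyV A b)) (u : Fin n → ℝ) {v : Fin n → ℝ}
    (hv : v ∈ polyV A b) : zstar A b u ≤ u ⬝ᵥ v :=
  csInf_le (isCompact_image_dotProduct_polyV hbd u).bddBelow ⟨v, hv, rfl⟩

lemma Vstar_nonempty (hne : (polyV A b).Nonempty) (hbd : Bornology.IsBounded (polyV A b))
    (u : Fin n → ℝ) : (Vstar A b u).Nonempty :=
  (isCompact_image_dotProduct_polyV hbd u).sInf_mem (hne.image _)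

lemma isCompact_Vstar (hbd : Bornology.IsBounded (polyV A b)) (u : Fin n → ℝ) :
    IsCompact (Vstar A b u) :=
  (isCompact_polyV hbd).inter_right
    (isClosed_eq (continuous_const.dotProduct continuous_id) continuous_const)

lemma mem_Vstar_iff_fromRows (hbd : Bornology.IsBounded (polyV A b)) (u v : Fin n → ℝ) :
    v ∈ Vstar A b u ↔
      Sum.elim b (fun _ => -zstar A b u) ≤ A.fromRows (replicateRow Unit (-u)) *ᵥ v := by
  have hrow : (fun _ => -zstar A b u) ≤ replicateRow Unit (-u) *ᵥ v ↔ u ⬝ᵥ v ≤ zstar A b u := by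
    have h (w : Unit) : (replicateRow Unit (-u) *ᵥ v) w = -(u ⬝ᵥ v) := neg_dotProduct u v
    simp [Pi.le_def, h]
  rw [fromRows_mulVec, Sum.elim_le_elim_iff, hrow]
  exact ⟨fun h => ⟨h.1, h.2.le⟩, fun h => ⟨h.1, le_antisymm h.2 (zstar_le hbd u h.1)⟩⟩

lemma eq_zero_of_mulVec_nonneg (hne : (polyV A b).Nonempty) (hbd : Bornology.IsBounded (polyV A b))
    {δ : Fin n → ℝ} (hδ : 0 ≤ A *ᵥ δ) : δ = 0 := by
  obtain ⟨v, hv⟩ := hne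
  obtain ⟨R, hR⟩ := hbd.exists_norm_le
  have hray : ∀ t : ℝ, 0 ≤ t → v + t • δ ∈ polyV A b := fun t ht => by
    simpa [polyV, mulVec_add, mulVec_smul] using add_le_add hv (smul_nonneg ht hδ)
  by_contra hδ0
  have hδpos : 0 < ‖δ‖ := norm_pos_iff.mpr hδ0
  have hvR : ‖v‖ ≤ R := hR v hv
  set t := (R + ‖v‖ + 1) / ‖δ‖
  have ht : 0 ≤ t := div_nonneg (by linarith [norm_nonneg v]) hδpos.le
  have htδ : ‖t • δ‖ = R + ‖v‖ + 1 := by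
    rw [norm_smul, Real.norm_of_nonneg ht, div_mul_cancel₀ _ hδpos.ne']
  have := norm_sub_le (v + t • δ) v
  rw [add_sub_cancel_left, htδ] at this
  linarith [hR _ (hray t ht)]

lemma mul_zstar_le_dotProduct (hne : (polyV A b).Nonempty) (hbd : Bornology.IsBounded (polyV A b))
    (u : Fin n → ℝ) {γ : ℝ} {δ : Fin n → ℝ} (hγ : 0 ≤ γ) (hδ : γ • b ≤ A *ᵥ δ) :
    γ * zstar A b u ≤ u ⬝ᵥ δ := by
  rcases hγ.eq_or_lt with rfl | hγ
  · rw [eq_zero_of_mulVec_nonneg (δ := δ) hne hbd (by simpa using hδ), zero_mul, dotProduct_zero]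
  · have hmem : γ⁻¹ • δ ∈ polyV A b := by
      change b ≤ A *ᵥ (γ⁻¹ • δ)
      rwa [mulVec_smul, le_inv_smul_iff_of_pos hγ]
    have := zstar_le hbd u hmem
    rwa [dotProduct_smul, smul_eq_mul, le_inv_mul_iff₀ hγ] at this

lemma dotProduct_le_of_mem_Vstar (hne : (polyV A b).Nonempty)
    (hbd : Bornology.IsBounded (polyV A b)) {u v δ : Fin n → ℝ} {μ : Fin m → ℝ} {γ : ℝ}
    (hμ : μ ≤ 0) (hγ : 0 ≤ γ) (hδ : γ • b ≤ A *ᵥ δ) (hv : v ∈ Vstar A b u) :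
    (Aᵀ *ᵥ μ + γ • u) ⬝ᵥ v ≤ b ⬝ᵥ μ + u ⬝ᵥ δ := by
  obtain ⟨hvV, hvz⟩ := hv
  have hμA : (Aᵀ *ᵥ μ) ⬝ᵥ v ≤ b ⬝ᵥ μ := by
    have := dotProduct_le_dotProduct_of_nonneg_right hvV (neg_nonneg.mpr hμ)
    rw [dotProduct_neg, dotProduct_neg, neg_le_neg_iff] at this
    rwa [mulVec_transpose, ← dotProduct_mulVec, dotProduct_comm]
  rw [add_dotProduct, smul_dotProduct, smul_eq_mul, hvz]
  linarith [mul_zstar_le_dotProduct hne hbd u hγ hδ]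

lemma exists_dual_le_dotProduct_Vstar (hne : (polyV A b).Nonempty)
    (hbd : Bornology.IsBounded (polyV A b)) (u cc : Fin n → ℝ) :
    ∃ (μ : Fin m → ℝ) (γ : ℝ) (δ : Fin n → ℝ),
      (Aᵀ *ᵥ μ + γ • u = cc ∧ γ • b ≤ A *ᵥ δ ∧ μ ≤ 0 ∧ 0 ≤ γ) ∧
      ∃ v ∈ Vstar A b u, b ⬝ᵥ μ + u ⬝ᵥ δ ≤ cc ⬝ᵥ v := by
  obtain ⟨v, hv, hmax⟩ := (isCompact_Vstar hbd u).exists_isMaxOn (Vstar_nonempty hne hbd u)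
    (continuous_const.dotProduct continuous_id).continuousOn
  obtain ⟨y, hy, hyM, hyv⟩ := lp_strong_duality (A.fromRows (replicateRow Unit (-u)))
    (Sum.elim b fun _ => -zstar A b u) (-cc) ((mem_Vstar_iff_fromRows hbd u v).mp hv)
    fun w hw => by simpa using hmax ((mem_Vstar_iff_fromRows hbd u w).mpr hw)
  obtain ⟨y, t, rfl⟩ : ∃ y₁ t, y = Sum.elim y₁ t := ⟨_, _, (Sum.elim_comp_inl_inr y).symm⟩
  have hrow : t ᵥ* replicateRow Unit (-u) = -(t () • u) := by
    ext; simp [vecMul, replicateRow, dotProduct]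
  rw [vecMul_fromRows, Sum.elim_comp_inl, Sum.elim_comp_inr, hrow] at hyM
  have hz : (fun _ => -zstar A b u) ⬝ᵥ t = -(t () * u ⬝ᵥ v) := by
    rw [← hv.2, dotProduct, Fintype.sum_unique]
    ring
  rw [sumElim_dotProduct_sumElim, hz, neg_dotProduct] at hyv
  -- `γ` is the multiplier of the extra row `-u ⬝ᵥ v ≥ -z*(u)`
  refine ⟨-y, t (), t () • v, ⟨?_, ?_, fun j => neg_nonpos.mpr (hy (Sum.inl j)), hy (Sum.inr ())⟩,
    v, hv, ?_⟩
  · rw [mulVec_neg, mulVec_transpose]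
    linear_combination (norm := module) -hyM
  · rw [mulVec_smul]
    exact smul_le_smul_of_nonneg_left hv.1 (hy (Sum.inr ()))
  · rw [dotProduct_neg, dotProduct_smul, smul_eq_mul]
    linarith

end Polyhedron

section PessValue

variable {m n N K : ℕ} {A : Matrix (Fin m) (Fin n) ℝ} {b : Fin m → ℝ}
  {x : Fin N → Fin K → ℝ} {c : Fin N → Fin n → ℝ} {ω : Matrix (Fin n) (Fin K) ℝ}

lemma one_div_mul_sum_dotProduct (c v : Fin N → Fin n → ℝ) :
    (1 / (N : ℝ)) * ∑ i, c i ⬝ᵥ v i = ∑ i, ((1 / (N : ℝ)) • c i) ⬝ᵥ v i := by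
  simp only [Finset.mul_sum, smul_dotProduct, smul_eq_mul]

lemma pessValue_le_sum (hne : (polyV A b).Nonempty) (hbd : Bornology.IsBounded (polyV A b))
    {B : Fin N → ℝ} (h : ∀ i, ∀ v ∈ Vstar A b (ω *ᵥ x i), ((1 / (N : ℝ)) • c i) ⬝ᵥ v ≤ B i) :
    pessValue A b x c ω ≤ ∑ i, B i := by
  choose v hv using fun i => Vstar_nonempty hne hbd (ω *ᵥ x i)
  refine csSup_le ⟨_, v, hv, rfl⟩ ?_
  rintro r ⟨v, hv, rfl⟩
  rw [one_div_mul_sum_dotProduct]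
  exact Finset.sum_le_sum fun i _ => h i (v i) (hv i)

lemma sum_le_pessValue (hbd : Bornology.IsBounded (polyV A b)) {B : Fin N → ℝ}
    (h : ∀ i, ∃ v ∈ Vstar A b (ω *ᵥ x i), B i ≤ ((1 / (N : ℝ)) • c i) ⬝ᵥ v) :
    ∑ i, B i ≤ pessValue A b x c ω := by
  choose v hv hBv using h
  choose C hC using fun i => (isCompact_image_dotProduct_polyV hbd ((1 / (N : ℝ)) • c i)).bddAbove
  have hbdd : BddAbove {r : ℝ | ∃ v : Fin N → Fin n → ℝ,
      (∀ i, v i ∈ Vstar A b (ω *ᵥ x i)) ∧ r = (1 / (N : ℝ)) * ∑ i, c i ⬝ᵥ v i} := by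
    refine ⟨∑ i, C i, ?_⟩
    rintro r ⟨w, hw, rfl⟩
    rw [one_div_mul_sum_dotProduct]
    exact Finset.sum_le_sum fun i _ => hC i ⟨w i, (hw i).1, rfl⟩
  calc ∑ i, B i ≤ ∑ i, ((1 / (N : ℝ)) • c i) ⬝ᵥ v i := Finset.sum_le_sum fun i _ => hBv i
    _ = (1 / (N : ℝ)) * ∑ i, c i ⬝ᵥ v i := (one_div_mul_sum_dotProduct c v).symm
    _ ≤ pessValue A b x c ω := le_csSup hbdd ⟨v, hv, rfl⟩

end PessValue

theorem stmt_3 (m n N K : ℕ)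
    (A : Matrix (Fin m) (Fin n) ℝ) (b : Fin m → ℝ)
    (hne : (polyV A b).Nonempty) (hbd : Bornology.IsBounded (polyV A b))
    (x : Fin N → Fin K → ℝ) (c : Fin N → Fin n → ℝ)
    (ωbar : Matrix (Fin n) (Fin K) ℝ)
    (μs : Fin N → Fin m → ℝ) (δs : Fin N → Fin n → ℝ) (γs : Fin N → ℝ)
    (hfeas : ∀ i, Aᵀ.mulVec (μs i) + γs i • ωbar.mulVec (x i) = (1 / (N : ℝ)) • c i ∧
        γs i • b ≤ A.mulVec (δs i) ∧ μs i ≤ 0 ∧ 0 ≤ γs i)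
    (hmin : ∀ (μ : Fin N → Fin m → ℝ) (δ : Fin N → Fin n → ℝ) (γ : Fin N → ℝ),
        (∀ i, Aᵀ.mulVec (μ i) + γ i • ωbar.mulVec (x i) = (1 / (N : ℝ)) • c i ∧
          γ i • b ≤ A.mulVec (δ i) ∧ μ i ≤ 0 ∧ 0 ≤ γ i) →
        ∑ i, (b ⬝ᵥ μs i + ωbar.mulVec (x i) ⬝ᵥ δs i) ≤
          ∑ i, (b ⬝ᵥ μ i + ωbar.mulVec (x i) ⬝ᵥ δ i))
    (μ' : Fin N → Fin m → ℝ) (ω' : Matrix (Fin n) (Fin K) ℝ)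
    (hfeas' : ∀ i, Aᵀ.mulVec (μ' i) + γs i • ω'.mulVec (x i) = (1 / (N : ℝ)) • c i ∧
        μ' i ≤ 0)
    (hmin' : ∀ (μ : Fin N → Fin m → ℝ) (ω : Matrix (Fin n) (Fin K) ℝ),
        (∀ i, Aᵀ.mulVec (μ i) + γs i • ω.mulVec (x i) = (1 / (N : ℝ)) • c i ∧ μ i ≤ 0) →
        ∑ i, (b ⬝ᵥ μ' i + ω'.mulVec (x i) ⬝ᵥ δs i) ≤
          ∑ i, (b ⬝ᵥ μ i + ω.mulVec (x i) ⬝ᵥ δs i)) :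
    pessValue A b x c ω' ≤ pessValue A b x c ωbar := by
  choose μd γd δd hd hvd using fun i =>
    exists_dual_le_dotProduct_Vstar hne hbd (ωbar *ᵥ x i) ((1 / (N : ℝ)) • c i)
  calc pessValue A b x c ω' ≤ ∑ i, (b ⬝ᵥ μ' i + ω' *ᵥ x i ⬝ᵥ δs i) :=
        pessValue_le_sum hne hbd fun i v hv => (hfeas' i).1 ▸
          dotProduct_le_of_mem_Vstar hne hbd (hfeas' i).2 (hfeas i).2.2.2 (hfeas i).2.1 hv
    _ ≤ ∑ i, (b ⬝ᵥ μs i + ωbar *ᵥ x i ⬝ᵥ δs i) :=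
        hmin' μs ωbar fun i => ⟨(hfeas i).1, (hfeas i).2.2.1⟩
    _ ≤ ∑ i, (b ⬝ᵥ μd i + ωbar *ᵥ x i ⬝ᵥ δd i) := hmin μd δd γd hd
    _ ≤ pessValue A b x c ωbar := sum_le_pessValue hbd hvd
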